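/- arXiv:2212.02889 — 4 statements merged into one kernel-verified Lean document; each statement's English description precedes it below -/
import Mathlib

section
/- Let n ≥ 4 and let M : Fin n → Fin n → ℝ be a symmetric matrix with zero diagonal satisfying the PIC0 condition, i.e. M i k + M j k > 0 for all pairwise distinct indices i, j, k. Then for every nonzero vector h : Fin n → ℝ one has the strict pinching inequality (∑_{i<j} M i j) · (∑_k (h k)²) − 2 · ∑_{i<j} M i j · (h i) · (h j) > 0. (Equivalently, writing R = ∑_{i<j} M i j and Q(h) = ∑_{i<j} M i j · h i · h j for the associated quadratic form, one has 2 Q(h) < R · |h|² for all h ≠ 0.) -/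
/-!
PIC0 says that each functional `M ↦ M i k + M j k`, one for every cherry `i – k – j` of distinct
indices, is positive; the claim is that `M ↦ ∑_{i<k} M i k (|h|² - 2 h i h k)` is positive too.
It is enough to write the latter as a nonnegative combination of the former (a Farkas certificate).
The weights `c i j k = |h|² - 2 h i h k + 2 (h i - h k) h j = ∑_{l ∉ {i,j,k}} h l² + (h i + h j - h k)²`
do it: for symmetric `M`, `∑ c i j k (M i k + M j k) = 4 (n - 2) ∑_{i<k} M i k (|h|² - 2 h i h k)`,
because `c i j k = c j i k` and `c i j k + c k j i = 2 (|h|² - 2 h i h k)`. If `h l ≠ 0` and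
`n ≥ 4`, any cherry avoiding `l` has `c i j k ≥ h l² > 0`, which makes the inequality strict.
-/

open Finset

section Cherry

variable {ι : Type*} [Fintype ι]

def cherryCoeff (h : ι → ℝ) (i j k : ι) : ℝ :=
  ∑ l, h l ^ 2 - 2 * h i * h k + 2 * (h i - h k) * h j

theorem cherryCoeff_comm (h : ι → ℝ) (i j k : ι) :
    cherryCoeff h i j k = cherryCoeff h j i k := by
  unfold cherryCoeff; ring

theorem cherryCoeff_add_cherryCoeff_swap (h : ι → ℝ) (i j k : ι) :
    cherryCoeff h i j k + cherryCoeff h k j i = 2 * (∑ l, h l ^ 2 - 2 * h i * h k) := by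
  unfold cherryCoeff; ring

variable [DecidableEq ι]

theorem cherryCoeff_eq_sum_compl_add_sq (h : ι → ℝ) {i j k : ι} (hij : i ≠ j) (hik : i ≠ k)
    (hjk : j ≠ k) :
    cherryCoeff h i j k = ∑ l ∈ {i, j, k}ᶜ, h l ^ 2 + (h i + h j - h k) ^ 2 := by
  rw [cherryCoeff, ← sum_compl_add_sum {i, j, k}, sum_insert (by simp [hij, hik]), sum_pair hjk]
  ring

theorem sum_compl_sum_compl_pair_comm {β : Type*} [AddCommMonoid β] (k : ι) (f : ι → ι → β) :
    ∑ i ∈ {k}ᶜ, ∑ j ∈ {i, k}ᶜ, f i j = ∑ i ∈ {k}ᶜ, ∑ j ∈ {i, k}ᶜ, f j i :=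
  sum_comm' fun i j => by simp only [mem_compl, mem_insert, mem_singleton]; tauto

theorem sum_sum_compl_eq_sum_lt [LinearOrder ι] {β : Type*} [AddCommMonoid β]
    (f : ι → ι → β) :
    ∑ k, ∑ i ∈ {k}ᶜ, f i k =
      ∑ p ∈ univ.filter (fun p : ι × ι => p.1 < p.2), (f p.1 p.2 + f p.2 p.1) := by
  have hswap : ∑ i, ∑ k, (if i < k then f k i else 0) = ∑ i, ∑ k, if k < i then f i k else 0 :=
    sum_comm
  simp only [sum_filter, Fintype.sum_prod_type, sum_add_distrib]
  rw [hswap]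
  simp_rw [← sum_add_distrib]
  rw [sum_comm (γ := ι)]
  refine sum_congr rfl fun k _ => ?_
  rw [compl_singleton, ← filter_ne', sum_filter]
  refine sum_congr rfl fun i _ => ?_
  rcases lt_trichotomy i k with hik | rfl | hki
  · simp [hik, hik.ne, hik.not_gt]
  · simp
  · simp [hki, hki.ne', hki.not_gt]

variable (M : ι → ι → ℝ) (h : ι → ℝ)

def cherrySum : ℝ :=
  ∑ k, ∑ i ∈ {k}ᶜ, ∑ j ∈ {i, k}ᶜ, cherryCoeff h i j k * (M i k + M j k)

theorem cherrySum_eq_two_mul_sum :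
    cherrySum M h = 2 * ∑ k, ∑ i ∈ {k}ᶜ, M i k * ∑ j ∈ {i, k}ᶜ, cherryCoeff h i j k := by
  rw [cherrySum, mul_sum]
  refine sum_congr rfl fun k _ => ?_
  simp only [mul_add, sum_add_distrib]
  rw [sum_compl_sum_compl_pair_comm k fun i j => cherryCoeff h i j k * M j k, mul_sum,
    ← sum_add_distrib]
  refine sum_congr rfl fun i _ => ?_
  rw [← sum_add_distrib, mul_sum, mul_sum]
  exact sum_congr rfl fun j _ => by rw [cherryCoeff_comm h j i k]; ring

theorem cherrySum_eq [LinearOrder ι] (hsymm : ∀ i j, M i j = M j i) :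
    cherrySum M h = 4 * (Fintype.card ι - 2) *
      ∑ p ∈ univ.filter (fun p : ι × ι => p.1 < p.2),
        M p.1 p.2 * (∑ l, h l ^ 2 - 2 * h p.1 * h p.2) := by
  rw [cherrySum_eq_two_mul_sum, sum_sum_compl_eq_sum_lt, mul_sum, mul_sum]
  refine sum_congr rfl fun p hp => ?_
  have hne : p.1 ≠ p.2 := (mem_filter.mp hp).2.ne
  rw [hsymm p.2 p.1, pair_comm p.2 p.1, ← mul_add, ← sum_add_distrib]
  simp only [cherryCoeff_add_cherryCoeff_swap, sum_const, card_compl, nsmul_eq_mul]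
  rw [Nat.cast_sub (card_le_univ _), card_pair hne]
  push_cast
  ring

theorem cherrySum_pos (hcard : 4 ≤ Fintype.card ι)
    (hPIC0 : ∀ i j k : ι, i ≠ j → i ≠ k → j ≠ k → 0 < M i k + M j k) (hne : h ≠ 0) :
    0 < cherrySum M h := by
  have distinct_of_mem : ∀ {i j k : ι}, i ∈ ({k}ᶜ : Finset ι) → j ∈ ({i, k}ᶜ : Finset ι) →
      i ≠ j ∧ i ≠ k ∧ j ≠ k := by
    intro i j k hi hj
    simp only [mem_compl, mem_insert, mem_singleton, not_or] at hi hj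
    exact ⟨Ne.symm hj.1, hi, hj.2⟩
  have hterm : ∀ k, ∀ i ∈ ({k}ᶜ : Finset ι), ∀ j ∈ ({i, k}ᶜ : Finset ι),
      0 ≤ cherryCoeff h i j k * (M i k + M j k) := by
    intro k i hi j hj
    obtain ⟨hij, hik, hjk⟩ := distinct_of_mem hi hj
    rw [cherryCoeff_eq_sum_compl_add_sq h hij hik hjk]
    exact mul_nonneg (by positivity) (hPIC0 i j k hij hik hjk).le
  obtain ⟨l, hl⟩ := Function.ne_iff.mp hne
  have hcompl : 2 < #({l}ᶜ : Finset ι) := by rw [card_compl, card_singleton]; omega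
  obtain ⟨i, hi, j, hj, k, hk, hij, hik, hjk⟩ := two_lt_card.mp hcompl
  have hl_mem : l ∈ ({i, j, k}ᶜ : Finset ι) := by
    simp only [mem_compl, mem_singleton] at hi hj hk
    simp only [mem_compl, mem_insert, mem_singleton, not_or]
    exact ⟨Ne.symm hi, Ne.symm hj, Ne.symm hk⟩
  have hcoeff : 0 < cherryCoeff h i j k := by
    rw [cherryCoeff_eq_sum_compl_add_sq h hij hik hjk]
    have := single_le_sum (fun l _ => sq_nonneg (h l)) hl_mem
    nlinarith [sq_nonneg (h i + h j - h k), pow_two_pos_of_ne_zero hl]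
  have hi' : i ∈ ({k}ᶜ : Finset ι) := by simpa using hik
  have hj' : j ∈ ({i, k}ᶜ : Finset ι) := by simp [hij.symm, hjk]
  exact sum_pos' (fun k _ => sum_nonneg fun i hi => sum_nonneg (hterm k i hi))
    ⟨k, mem_univ k, sum_pos' (fun i hi => sum_nonneg (hterm k i hi))
      ⟨i, hi', sum_pos' (hterm k i hi') ⟨j, hj', mul_pos hcoeff (hPIC0 i j k hij hik hjk)⟩⟩⟩

end Cherry

theorem pinching_form_eq_sum {ι : Type*} [Fintype ι] (M : ι → ι → ℝ) (h : ι → ℝ)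
    (s : Finset (ι × ι)) :
    (∑ p ∈ s, M p.1 p.2) * (∑ k, h k ^ 2) - 2 * ∑ p ∈ s, M p.1 p.2 * h p.1 * h p.2 =
      ∑ p ∈ s, M p.1 p.2 * (∑ l, h l ^ 2 - 2 * h p.1 * h p.2) := by
  rw [sum_mul, mul_sum, ← sum_sub_distrib]
  exact sum_congr rfl fun p _ => by ring

theorem pic0_implies_pinching_general (n : ℕ) (hn : 4 ≤ n) (M : Fin n → Fin n → ℝ)
    (hsymm : ∀ i j, M i j = M j i)
    (hPIC0 : ∀ i j k : Fin n, i ≠ j → i ≠ k → j ≠ k → 0 < M i k + M j k)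
    (h : Fin n → ℝ) (hne : h ≠ 0) :
    (∑ p ∈ Finset.univ.filter (fun p : Fin n × Fin n => p.1 < p.2), M p.1 p.2) *
        (∑ k, (h k) ^ 2) -
      2 * ∑ p ∈ Finset.univ.filter (fun p : Fin n × Fin n => p.1 < p.2),
        M p.1 p.2 * h p.1 * h p.2 > 0 := by
  have hcard : 4 ≤ Fintype.card (Fin n) := by rwa [Fintype.card_fin]
  have hpos := cherrySum_pos M h hcard hPIC0 hne
  rw [cherrySum_eq M h hsymm] at hpos
  have hfactor : (0 : ℝ) < 4 * (Fintype.card (Fin n) - 2) := by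
    have : (4 : ℝ) ≤ Fintype.card (Fin n) := by exact_mod_cast hcard
    linarith
  rw [gt_iff_lt, pinching_form_eq_sum]
  exact (pos_iff_pos_of_mul_pos hpos).mp hfactor

/-- For `n ≥ 4` and a symmetric matrix `M : Fin n → Fin n → ℝ` with zero
diagonal satisfying the PIC0 condition (`M i k + M j k > 0` for pairwise distinct
`i, j, k`), every nonzero `h : Fin n → ℝ` satisfies the strict pinching inequality
`(∑_{i<j} M i j) * (∑ k, (h k)^2) - 2 * ∑_{i<j} M i j * h i * h j > 0`. -/
theorem pic0_implies_pinching (n : ℕ) (hn : 4 ≤ n) (M : Fin n → Fin n → ℝ)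
    (hsymm : ∀ i j, M i j = M j i) (hdiag : ∀ i, M i i = 0)
    (hPIC0 : ∀ i j k : Fin n, i ≠ j → i ≠ k → j ≠ k → 0 < M i k + M j k)
    (h : Fin n → ℝ) (hne : h ≠ 0) :
    (∑ p ∈ Finset.univ.filter (fun p : Fin n × Fin n => p.1 < p.2), M p.1 p.2) *
        (∑ k, (h k) ^ 2) -
      2 * ∑ p ∈ Finset.univ.filter (fun p : Fin n × Fin n => p.1 < p.2),
        M p.1 p.2 * h p.1 * h p.2 > 0 :=
  pic0_implies_pinching_general n hn M hsymm hPIC0 h hne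
end

section
/- Let n ≥ 4 and let M : Fin n → Fin n → ℝ be a symmetric matrix with zero diagonal satisfying the PIC0 condition, i.e. M i k + M j k > 0 for all pairwise distinct indices i, j, k. Then for any pairwise distinct indices i, j, k, l and any h : Fin n → ℝ, the six-term sum M i j · (h i − h j)² + M i k · (h i − h k)² + M i l · (h i − h l)² + M j k · (h j − h k)² + M j l · (h j − h l)² + M k l · (h k − h l)² is nonnegative. -/
/-!
View the six weights as weights on the edges of the complete graph on the four indices; PIC0 says
that any two edges sharing a vertex have positive total weight. If some weight is `≤ 0`, let `a` be
the lighter of that edge and its opposite edge (of weight `f`). The identity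
`sq_sub_add_sq_sub_add_sq_sub_add_sq_sub` rewrites the form as a combination of squares with the
nonnegative coefficients `a + (adjacent weight)`, `f - a` and `-a`.
-/

def k4DirichletForm (a b c d e f x y z w : ℝ) : ℝ :=
  a * (x - y) ^ 2 + b * (x - z) ^ 2 + c * (x - w) ^ 2 + d * (y - z) ^ 2 + e * (y - w) ^ 2 +
    f * (z - w) ^ 2

theorem sq_sub_add_sq_sub_add_sq_sub_add_sq_sub (x y z w : ℝ) :
    (x - z) ^ 2 + (x - w) ^ 2 + (y - z) ^ 2 + (y - w) ^ 2 =
      (x - y) ^ 2 + (z - w) ^ 2 + (x + y - z - w) ^ 2 := by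
  ring

section K4DirichletForm

variable {a b c d e f : ℝ}

theorem k4DirichletForm_swap_pairs (a b c d e f x y z w : ℝ) :
    k4DirichletForm a b c d e f x y z w = k4DirichletForm f b d c e a z w x y := by
  unfold k4DirichletForm; ring

theorem k4DirichletForm_swap_yz (a b c d e f x y z w : ℝ) :
    k4DirichletForm a b c d e f x y z w = k4DirichletForm b a c d f e x z y w := by
  unfold k4DirichletForm; ring

theorem k4DirichletForm_swap_yw (a b c d e f x y z w : ℝ) :
    k4DirichletForm a b c d e f x y z w = k4DirichletForm c b a f e d x w z y := by
  unfold k4DirichletForm; ring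

theorem k4DirichletForm_nonneg_of_nonneg (ha : 0 ≤ a) (hb : 0 ≤ b) (hc : 0 ≤ c) (hd : 0 ≤ d)
    (he : 0 ≤ e) (hf : 0 ≤ f) (x y z w : ℝ) : 0 ≤ k4DirichletForm a b c d e f x y z w := by
  unfold k4DirichletForm
  linarith [mul_nonneg ha (sq_nonneg (x - y)), mul_nonneg hb (sq_nonneg (x - z)),
    mul_nonneg hc (sq_nonneg (x - w)), mul_nonneg hd (sq_nonneg (y - z)),
    mul_nonneg he (sq_nonneg (y - w)), mul_nonneg hf (sq_nonneg (z - w))]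

theorem k4DirichletForm_nonneg_of_nonpos (ha : a ≤ 0) (haf : a ≤ f) (hab : 0 ≤ a + b)
    (hac : 0 ≤ a + c) (had : 0 ≤ a + d) (hae : 0 ≤ a + e) (x y z w : ℝ) :
    0 ≤ k4DirichletForm a b c d e f x y z w := by
  have hsos : k4DirichletForm a b c d e f x y z w =
      (a + b) * (x - z) ^ 2 + (a + c) * (x - w) ^ 2 + (a + d) * (y - z) ^ 2 +
        (a + e) * (y - w) ^ 2 + (f - a) * (z - w) ^ 2 + -a * (x + y - z - w) ^ 2 := by
    unfold k4DirichletForm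
    linear_combination -a * sq_sub_add_sq_sub_add_sq_sub_add_sq_sub x y z w
  rw [hsos]
  linarith [mul_nonneg hab (sq_nonneg (x - z)), mul_nonneg hac (sq_nonneg (x - w)),
    mul_nonneg had (sq_nonneg (y - z)), mul_nonneg hae (sq_nonneg (y - w)),
    mul_nonneg (sub_nonneg.2 haf) (sq_nonneg (z - w)),
    mul_nonneg (neg_nonneg.2 ha) (sq_nonneg (x + y - z - w))]

theorem k4DirichletForm_nonneg_of_nonpos_or_nonpos (h : a ≤ 0 ∨ f ≤ 0) (hab : 0 ≤ a + b)
    (hac : 0 ≤ a + c) (had : 0 ≤ a + d) (hae : 0 ≤ a + e) (hbf : 0 ≤ b + f) (hcf : 0 ≤ c + f)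
    (hdf : 0 ≤ d + f) (hef : 0 ≤ e + f) (x y z w : ℝ) :
    0 ≤ k4DirichletForm a b c d e f x y z w := by
  rcases le_total a f with haf | hfa
  · exact k4DirichletForm_nonneg_of_nonpos (h.elim id haf.trans) haf hab hac had hae x y z w
  · rw [k4DirichletForm_swap_pairs]
    apply k4DirichletForm_nonneg_of_nonpos (h.elim hfa.trans id) hfa <;> linarith

theorem k4DirichletForm_nonneg (hab : 0 ≤ a + b) (hac : 0 ≤ a + c) (hbc : 0 ≤ b + c)
    (had : 0 ≤ a + d) (hae : 0 ≤ a + e) (hde : 0 ≤ d + e) (hbd : 0 ≤ b + d) (hbf : 0 ≤ b + f)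
    (hdf : 0 ≤ d + f) (hce : 0 ≤ c + e) (hcf : 0 ≤ c + f) (hef : 0 ≤ e + f) (x y z w : ℝ) :
    0 ≤ k4DirichletForm a b c d e f x y z w := by
  by_cases haf : a ≤ 0 ∨ f ≤ 0
  · exact k4DirichletForm_nonneg_of_nonpos_or_nonpos haf hab hac had hae hbf hcf hdf hef x y z w
  by_cases hbe : b ≤ 0 ∨ e ≤ 0
  · rw [k4DirichletForm_swap_yz]
    apply k4DirichletForm_nonneg_of_nonpos_or_nonpos hbe <;> linarith
  by_cases hcd : c ≤ 0 ∨ d ≤ 0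
  · rw [k4DirichletForm_swap_yw]
    apply k4DirichletForm_nonneg_of_nonpos_or_nonpos hcd <;> linarith
  simp only [not_or, not_le] at haf hbe hcd
  exact k4DirichletForm_nonneg_of_nonneg haf.1.le hbe.1.le hcd.1.le hcd.2.le hbe.2.le haf.2.le
    x y z w

end K4DirichletForm

theorem pic0_six_term_nonneg_general (n : ℕ) (M : Fin n → Fin n → ℝ)
    (hsymm : ∀ i j, M i j = M j i)
    (hPIC0 : ∀ i j k : Fin n, i ≠ j → i ≠ k → j ≠ k → 0 < M i k + M j k)
    (i j k l : Fin n) (hij : i ≠ j) (hik : i ≠ k) (hil : i ≠ l)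
    (hjk : j ≠ k) (hjl : j ≠ l) (hkl : k ≠ l) (h : Fin n → ℝ) :
    0 ≤ M i j * (h i - h j) ^ 2 + M i k * (h i - h k) ^ 2 + M i l * (h i - h l) ^ 2 +
        M j k * (h j - h k) ^ 2 + M j l * (h j - h l) ^ 2 + M k l * (h k - h l) ^ 2 := by
  have at_first {p q r : Fin n} (hpq : p ≠ q) (hpr : p ≠ r) (hqr : q ≠ r) :
      0 ≤ M p q + M p r := by
    simpa only [hsymm p] using (hPIC0 q r p hqr hpq.symm hpr.symm).le
  have at_middle {p q r : Fin n} (hpq : p ≠ q) (hpr : p ≠ r) (hqr : q ≠ r) :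
      0 ≤ M p q + M q r := by
    simpa only [hsymm q r] using (hPIC0 p r q hpr hpq hqr.symm).le
  have at_last {p q r : Fin n} (hpq : p ≠ q) (hpr : p ≠ r) (hqr : q ≠ r) :
      0 ≤ M p r + M q r :=
    (hPIC0 p q r hpq hpr hqr).le
  exact k4DirichletForm_nonneg (at_first hij hik hjk) (at_first hij hil hjl)
    (at_first hik hil hkl) (at_middle hij hik hjk) (at_middle hij hil hjl) (at_first hjk hjl hkl)
    (at_last hij hik hjk) (at_middle hik hil hkl) (at_middle hjk hjl hkl) (at_last hij hil hjl)
    (at_last hik hil hkl) (at_last hjk hjl hkl) (h i) (h j) (h k) (h l)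

/-- For `n ≥ 4` and a symmetric matrix `M : Fin n → Fin n → ℝ` with zero
diagonal satisfying the PIC0 condition, for any pairwise distinct indices `i, j, k, l`
and any `h : Fin n → ℝ`, the six-term sum of `M a b * (h a - h b)^2` over the six
unordered pairs in `{i,j,k,l}` is nonnegative. -/
theorem pic0_six_term_nonneg (n : ℕ) (hn : 4 ≤ n) (M : Fin n → Fin n → ℝ)
    (hsymm : ∀ i j, M i j = M j i) (hdiag : ∀ i, M i i = 0)
    (hPIC0 : ∀ i j k : Fin n, i ≠ j → i ≠ k → j ≠ k → 0 < M i k + M j k)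
    (i j k l : Fin n) (hij : i ≠ j) (hik : i ≠ k) (hil : i ≠ l)
    (hjk : j ≠ k) (hjl : j ≠ l) (hkl : k ≠ l) (h : Fin n → ℝ) :
    0 ≤ M i j * (h i - h j) ^ 2 + M i k * (h i - h k) ^ 2 + M i l * (h i - h l) ^ 2 +
        M j k * (h j - h k) ^ 2 + M j l * (h j - h l) ^ 2 + M k l * (h k - h l) ^ 2 :=
  pic0_six_term_nonneg_general n M hsymm hPIC0 i j k l hij hik hil hjk hjl hkl h
end

section
/- Let n ≥ 4 and let M : Fin n → Fin n → ℝ be a symmetric matrix with zero diagonal satisfying the PIC0 condition, i.e. M i k + M j k > 0 for all pairwise distinct indices i, j, k. Then for every fixed index i, the sum of M j k over all unordered pairs {j,k} of distinct indices with j ≠ i and k ≠ i is strictly positive: ∑_{j<k, j≠i, k≠i} M j k > 0. -/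
/-!
Fix `i` and put `s = {j | j ≠ i}`. Summing over ordered pairs counts each unordered pair twice,
so the sum in question is half of `∑_{k ∈ s} ∑_{j ∈ s \ {k}} M j k`. For fixed `k`, the numbers
`M j k` with `j ∈ s \ {k}` have pairwise positive sums by PIC0 and there are `n - 2 ≥ 2` of them,
so their sum is positive.
-/

open Finset

namespace Finset

/-- At most one term, the smallest, can be nonpositive; adding it to any other term is positive. -/
lemma sum_pos_of_pairwise_add_pos {α : Type*} [DecidableEq α] {s : Finset α} {f : α → ℝ}
    (hs : 2 ≤ #s) (h : ∀ p ∈ s, ∀ q ∈ s, p ≠ q → 0 < f p + f q) :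
    0 < ∑ x ∈ s, f x := by
  obtain ⟨m, hm, hmin⟩ := s.exists_min_image f (card_pos.mp (by omega))
  have hrest : ∀ q ∈ s.erase m, 0 < f q := fun q hq => by
    have := h m hm q (mem_of_mem_erase hq) (ne_of_mem_erase hq).symm
    linarith [hmin q (mem_of_mem_erase hq)]
  obtain ⟨q, hq⟩ : (s.erase m).Nonempty := card_pos.mp (by rw [card_erase_of_mem hm]; omega)
  have hmq := h m hm q (mem_of_mem_erase hq) (ne_of_mem_erase hq).symm
  have hfq : f q ≤ ∑ x ∈ s.erase m, f x :=
    single_le_sum (fun x hx => (hrest x hx).le) hq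
  rw [← add_sum_erase s f hm]
  linarith

lemma sum_offDiag_eq_sum_sum_erase {α β : Type*} [DecidableEq α] [AddCommMonoid β]
    (s : Finset α) (f : α → α → β) :
    ∑ p ∈ s.offDiag, f p.1 p.2 = ∑ k ∈ s, ∑ j ∈ s.erase k, f j k :=
  sum_finset_product_right' _ _ _ fun p => by
    simp only [mem_offDiag, mem_erase]
    tauto

lemma sum_offDiag_eq_two_mul_sum_filter_lt {α : Type*} [LinearOrder α] (s : Finset α)
    {f : α → α → ℝ} (hf : ∀ a b, f a b = f b a) :
    ∑ p ∈ s.offDiag, f p.1 p.2 = 2 * ∑ p ∈ s.offDiag with p.1 < p.2, f p.1 p.2 := by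
  have hswap : ∑ p ∈ s.offDiag with ¬ p.1 < p.2, f p.1 p.2
      = ∑ p ∈ s.offDiag with p.1 < p.2, f p.1 p.2 := by
    refine sum_nbij' Prod.swap Prod.swap ?_ ?_ (fun _ _ => rfl) (fun _ _ => rfl)
      fun p _ => hf p.1 p.2
    · intro p hp
      simp only [mem_filter, mem_offDiag] at hp ⊢
      exact ⟨⟨hp.1.2.1, hp.1.1, hp.1.2.2.symm⟩, lt_of_le_of_ne (not_lt.mp hp.2) hp.1.2.2.symm⟩
    · intro p hp
      simp only [mem_filter, mem_offDiag] at hp ⊢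
      exact ⟨⟨hp.1.2.1, hp.1.1, hp.1.2.2.symm⟩, not_lt.mpr hp.2.le⟩
  rw [← sum_filter_add_sum_filter_not _ (fun p : α × α => p.1 < p.2), hswap, two_mul]

lemma sum_offDiag_pos_of_pic0 {α : Type*} [DecidableEq α] {s : Finset α} {M : α → α → ℝ}
    (hs : 3 ≤ #s)
    (hPIC0 : ∀ i ∈ s, ∀ j ∈ s, ∀ k ∈ s, i ≠ j → i ≠ k → j ≠ k → 0 < M i k + M j k) :
    0 < ∑ p ∈ s.offDiag, M p.1 p.2 := by
  rw [sum_offDiag_eq_sum_sum_erase]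
  refine sum_pos (fun k hk => sum_pos_of_pairwise_add_pos ?_ fun p hp q hq hpq => ?_)
    (card_pos.mp (by omega))
  · rw [card_erase_of_mem hk]
    omega
  · rw [mem_erase] at hp hq
    exact hPIC0 p hp.2 q hq.2 k hk hpq hp.1 hq.1

end Finset

theorem pic0_pair_sum_avoiding_index_pos_general (n : ℕ) (hn : 4 ≤ n) (M : Fin n → Fin n → ℝ)
    (hsymm : ∀ i j, M i j = M j i)
    (hPIC0 : ∀ i j k : Fin n, i ≠ j → i ≠ k → j ≠ k → 0 < M i k + M j k)
    (i : Fin n) :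
    0 < ∑ p ∈ Finset.univ.filter
        (fun p : Fin n × Fin n => p.1 < p.2 ∧ p.1 ≠ i ∧ p.2 ≠ i), M p.1 p.2 := by
  have hpairs : Finset.univ.filter (fun p : Fin n × Fin n => p.1 < p.2 ∧ p.1 ≠ i ∧ p.2 ≠ i)
      = (univ.erase i).offDiag.filter (fun p => p.1 < p.2) := by
    ext p
    simp only [mem_filter, mem_univ, true_and, and_true, mem_offDiag, mem_erase]
    constructor
    · rintro ⟨hlt, h1, h2⟩
      exact ⟨⟨h1, h2, hlt.ne⟩, hlt⟩
    · rintro ⟨⟨h1, h2, -⟩, hlt⟩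
      exact ⟨hlt, h1, h2⟩
  have hcard : 3 ≤ #(univ.erase i) := by
    rw [card_erase_of_mem (mem_univ i), card_univ, Fintype.card_fin]
    omega
  have hpos := sum_offDiag_pos_of_pic0 hcard fun a _ b _ c _ => hPIC0 a b c
  rw [sum_offDiag_eq_two_mul_sum_filter_lt _ hsymm] at hpos
  rw [hpairs]
  linarith

/-- For `n ≥ 4` and a symmetric matrix `M : Fin n → Fin n → ℝ` with zero
diagonal satisfying the PIC0 condition, for every fixed index `i` the sum of `M j k`
over unordered pairs `{j,k}` of distinct indices avoiding `i` is strictly positive. -/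
theorem pic0_pair_sum_avoiding_index_pos (n : ℕ) (hn : 4 ≤ n) (M : Fin n → Fin n → ℝ)
    (hsymm : ∀ i j, M i j = M j i) (hdiag : ∀ i, M i i = 0)
    (hPIC0 : ∀ i j k : Fin n, i ≠ j → i ≠ k → j ≠ k → 0 < M i k + M j k)
    (i : Fin n) :
    0 < ∑ p ∈ Finset.univ.filter
        (fun p : Fin n × Fin n => p.1 < p.2 ∧ p.1 ≠ i ∧ p.2 ≠ i), M p.1 p.2 :=
  pic0_pair_sum_avoiding_index_pos_general n hn M hsymm hPIC0 i
end

section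
/- Let c ≥ 0 be a real number and let h_i, h_j, h_k, h_l, and real numbers a, b, p, q, r, s be given with a ≥ −c, b ≥ −c, and p, q, r, s ≥ c, where a plays the role of M i j, b of M k l, and p, q, r, s of M i k, M i l, M j k, M j l. Then a·(h_i−h_j)² + p·(h_i−h_k)² + q·(h_i−h_l)² + r·(h_j−h_k)² + s·(h_j−h_l)² + b·(h_k−h_l)² ≥ c·(h_i + h_j − h_k − h_l)² ≥ 0, using the algebraic identity (h_i−h_k)² + (h_i−h_l)² + (h_j−h_k)² + (h_j−h_l)² − (h_i−h_j)² − (h_k−h_l)² = (h_i + h_j − h_k − h_l)². -/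
/-! Expanding `c (hi + hj - hk - hl)²` by `sq_add_sub_sub` and subtracting it from the weighted sum
leaves `(a + c)(hi - hj)² + (p - c)(hi - hk)² + ⋯ + (b + c)(hk - hl)²`, a sum of squares with
nonnegative weights. -/

theorem sq_add_sub_sub {R : Type*} [CommRing R] (x y z w : R) :
    (x + y - z - w) ^ 2 =
      (x - z) ^ 2 + (x - w) ^ 2 + (y - z) ^ 2 + (y - w) ^ 2 - (x - y) ^ 2 - (z - w) ^ 2 := by
  ring

/-- If `c ≥ 0`, `a ≥ -c`, `b ≥ -c`, and `p, q, r, s ≥ c`, then the weighted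
six-term sum of squared differences is bounded below by `c * (hi + hj - hk - hl)^2`,
which is nonnegative, using the identity
`(hi-hk)^2 + (hi-hl)^2 + (hj-hk)^2 + (hj-hl)^2 - (hi-hj)^2 - (hk-hl)^2
  = (hi + hj - hk - hl)^2`. -/
theorem weighted_six_term_lower_bound (c a b p q r s hi hj hk hl : ℝ)
    (hc : 0 ≤ c) (ha : -c ≤ a) (hb : -c ≤ b)
    (hp : c ≤ p) (hq : c ≤ q) (hr : c ≤ r) (hs : c ≤ s) :
    a * (hi - hj) ^ 2 + p * (hi - hk) ^ 2 + q * (hi - hl) ^ 2 +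
        r * (hj - hk) ^ 2 + s * (hj - hl) ^ 2 + b * (hk - hl) ^ 2 ≥
      c * (hi + hj - hk - hl) ^ 2 ∧
      c * (hi + hj - hk - hl) ^ 2 ≥ 0 := by
  refine ⟨?_, by positivity⟩
  rw [ge_iff_le, sq_add_sub_sub]
  have hij := mul_nonneg (neg_le_iff_add_nonneg.1 ha) (sq_nonneg (hi - hj))
  have hkl := mul_nonneg (neg_le_iff_add_nonneg.1 hb) (sq_nonneg (hk - hl))
  have hik := mul_nonneg (sub_nonneg.2 hp) (sq_nonneg (hi - hk))
  have hil := mul_nonneg (sub_nonneg.2 hq) (sq_nonneg (hi - hl))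
  have hjk := mul_nonneg (sub_nonneg.2 hr) (sq_nonneg (hj - hk))
  have hjl := mul_nonneg (sub_nonneg.2 hs) (sq_nonneg (hj - hl))
  linear_combination hij + hkl + hik + hil + hjk + hjl
end
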